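/- Third-case tie-breaking: Under the partition setup, suppose S[i..] < S[j..], the suffixes agree on their first c characters, i+c = PSA[v] and j+c = PSA[w] for indices v, w ≤ k. Then v < w, and consequently the marker comparison #_v < #_w decides W'_{word(i)}[position(i)..] < W'_{word(j)}[position(j)..]. -/

import Mathlib

/-- Suffix of the extended string `S` (length `n`, sentinel `S n = 0`) starting at `i`,
as a list of characters. -/
def sfx (S : ℕ → ℕ) (n i : ℕ) : List ℕ :=
  (List.range (n + 1 - i)).map (fun t => S (i + t))

/-- `S` is a string of length `n` over a positive alphabet with the unique smallest
sentinel `0` appended at position `n`. -/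
def Sentinel (S : ℕ → ℕ) (n : ℕ) : Prop :=
  S n = 0 ∧ ∀ i < n, 0 < S i

/-- `SA` is the suffix array of `S` on positions `0..n`: a bijection of `{0,…,n}`
listing the suffixes in strictly increasing lexicographic order. -/
def IsSuffixArray (S : ℕ → ℕ) (n : ℕ) (SA : ℕ → ℕ) : Prop :=
  Set.BijOn SA (Set.Iic n) (Set.Iic n) ∧
  ∀ i j : ℕ, i ≤ n → j ≤ n → i < j →
    List.Lex (· < ·) (sfx S n (SA i)) (sfx S n (SA j))

/-- `Ω(j) = max({-1} ∪ {t ∈ PSA : t ≤ PSA[j]-1})`, where `PSA = SA[0..k]`. -/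
def Omega (SA : ℕ → ℕ) (k j : ℕ) : ℤ :=
  (insert (-1 : ℤ)
    (((Finset.range (k+1)).filter (fun t => SA t < SA j)).image
      (fun t => (SA t : ℤ)))).max' (Finset.insert_nonempty _ _)

/-- Character of `S` at an integer position: positions `-1` and `n` carry the
sentinel `0` (written `$`), characters of `Σ` are positive. -/
def Sc (S : ℕ → ℕ) (n : ℕ) (q : ℤ) : ℤ :=
  if 0 ≤ q ∧ q < n then (S q.toNat : ℤ) else 0

/-- `BWT(S)[i] = S[SA[i]-1]` with `S[-1] = $`. -/
def bwtS (S : ℕ → ℕ) (n : ℕ) (SA : ℕ → ℕ) (i : ℕ) : ℤ :=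
  Sc S n ((SA i : ℤ) - 1)

/-- The word `W_j = S[Ω(j) .. PSA[j]-1]` as a list of characters. -/
def wordList (S : ℕ → ℕ) (n : ℕ) (SA : ℕ → ℕ) (k j : ℕ) : List ℤ :=
  (List.range ((SA j : ℤ) - Omega SA k j).toNat).map
    (fun t => Sc S n (Omega SA k j + t))

/-- The marked word `W'_j = W_j · #_j`, where the distinct markers are encoded as
`#_j = j - (k+1)`, so that `#_0 < … < #_k < $ = 0 < Σ`. -/
def wordM (S : ℕ → ℕ) (n : ℕ) (SA : ℕ → ℕ) (k j : ℕ) : List ℤ :=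
  wordList S n SA k j ++ [(j : ℤ) - (k + 1)]

/-- A position `q ∈ {0,…,n}` of `S` viewed in `{-1,…,n-1}`: position `n` is
identified with `-1` (first right rotation). -/
def posZ (n q : ℕ) : ℤ := if q = n then -1 else (q : ℤ)

/-- `SAW`/`DAW` form the (suffix array, document array) pair for the collection
`Wc 0, …, Wc (l-1)`: the `i`-th lexicographically smallest of the `m` suffixes of
the collection is `(Wc (DAW i)).drop (SAW i)`. -/
def IsMSA (Wc : ℕ → List ℤ) (l m : ℕ) (SAW DAW : ℕ → ℕ) : Prop :=
  (∀ i < m, DAW i < l ∧ SAW i < (Wc (DAW i)).length) ∧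
  (∀ j < l, ∀ p < (Wc j).length, ∃! i, i < m ∧ DAW i = j ∧ SAW i = p) ∧
  ∀ i j : ℕ, i < m → j < m → i < j →
    List.Lex (· < ·) ((Wc (DAW i)).drop (SAW i)) ((Wc (DAW j)).drop (SAW j))

/-- Multi-string BWT: the character cyclically preceding the `i`-th smallest
suffix within its word. -/
def bwtW (Wc : ℕ → List ℤ) (SAW DAW : ℕ → ℕ) (i : ℕ) : ℤ :=
  (Wc (DAW i)).getD ((SAW i + (Wc (DAW i)).length - 1) % (Wc (DAW i)).length) 0

/-!
Stripping the common prefix of length `c` turns `S[i..] < S[j..]` into `S[PSA[v]..] < S[PSA[w]..]`,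
that is `v < w`. The suffix of `W'_{word(i)}` at `i` is the run `S[i..PSA[word(i)]-1]` followed by
the marker `#_{word(i)}`; compare it with the one of `j` at the first position where they differ.
A mismatch of letters inside both runs is the first mismatch of `S[i..]` and `S[j..]`; a marker
beats a letter; two markers meet only when both runs end together, and then they compare as the
two `PSA` suffixes they precede. The run of `j` cannot end first: the position reached in the run
of `i` lies strictly inside its word, yet its suffix is smaller than a `PSA` suffix, so it would be
in `PSA` itself. For `i = n` the word suffix starts with `$`, which beats the letter `S[j]`.
-/

theorem List.lex_map_range_append_singleton {α : Type*} {r : α → α → Prop} {f g : ℕ → α}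
    {d e b : ℕ} {m m' : α} (hbd : b ≤ d) (hbe : b ≤ e) (hagree : ∀ s < b, f s = g s)
    (hr : r (if b < d then f b else m) (if b < e then g b else m')) :
    List.Lex r ((List.range d).map f ++ [m]) ((List.range e).map g ++ [m']) := by
  obtain ⟨d, rfl⟩ := Nat.exists_eq_add_of_le hbd
  obtain ⟨e, rfl⟩ := Nat.exists_eq_add_of_le hbe
  have hprefix : (List.range b).map f = (List.range b).map g :=
    List.map_congr_left fun s hs => hagree s (List.mem_range.1 hs)
  simp only [List.range_add, List.map_append, List.map_map, hprefix, List.append_assoc]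
  apply List.Lex.append_left
  cases d <;> cases e <;> simp only [add_zero, lt_self_iff_false,
    lt_add_iff_pos_right, Order.lt_add_one_iff, zero_le, ↓reduceIte, List.range_zero,
    List.range_succ_eq_map, List.map_nil, List.map_cons, List.map_map, Function.comp_apply,
    List.nil_append, List.cons_append, List.lex_singleton_iff] at hr ⊢ <;>
    first | exact hr | exact List.Lex.rel hr

section Suffixes

variable {S : ℕ → ℕ} {n : ℕ}

theorem sfx_eq_cons {i : ℕ} (hi : i ≤ n) : sfx S n i = S i :: sfx S n (i + 1) := by
  rw [sfx, sfx, show n + 1 - i = n - i + 1 by omega, show n + 1 - (i + 1) = n - i by omega,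
    List.range_succ_eq_map, List.map_cons, List.map_map]
  congr 1
  exact List.map_congr_left fun s _ => by simp [Nat.add_assoc, Nat.add_comm 1 s]

theorem sfx_lt_sfx_iff_of_agree {i j c : ℕ} (hi : i + c ≤ n) (hj : j + c ≤ n)
    (hagree : ∀ b < c, S (i + b) = S (j + b)) :
    sfx S n i < sfx S n j ↔ sfx S n (i + c) < sfx S n (j + c) := by
  induction c generalizing i j with
  | zero => rfl
  | succ c ih =>
    have hhead : S i = S j := by simpa using hagree 0 c.succ_pos
    rw [sfx_eq_cons (i := i) (by omega), sfx_eq_cons (i := j) (by omega), hhead,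
      List.cons_lt_cons_iff,
      ih (by omega) (by omega) fun b hb => by
        simpa only [Nat.add_right_comm _ 1 b, Nat.add_assoc] using hagree (b + 1) (by omega)]
    simp [Nat.add_right_comm _ 1 c, Nat.add_assoc]

theorem Sentinel.not_sfx_lt_sfx_self (hS : Sentinel S n) {i : ℕ} (hi : i ≤ n) :
    ¬ sfx S n i < sfx S n n := by
  rw [sfx_eq_cons hi, sfx_eq_cons le_rfl, hS.1, List.cons_lt_cons_iff]
  simp [sfx]

end Suffixes

section SuffixArray

variable {S SA : ℕ → ℕ} {n : ℕ}

theorem IsSuffixArray.apply_le (hSA : IsSuffixArray S n SA) {t : ℕ} (ht : t ≤ n) : SA t ≤ n :=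
  hSA.1.1 (Set.mem_Iic.2 ht)

theorem IsSuffixArray.lt_of_sfx_lt (hSA : IsSuffixArray S n SA) {t u : ℕ} (ht : t ≤ n)
    (hu : u ≤ n) (h : sfx S n (SA t) < sfx S n (SA u)) : t < u :=
  (StrictMonoOn.lt_iff_lt (f := fun t => sfx S n (SA t)) (s := Set.Iic n)
    (fun _ ht _ hu htu => hSA.2 _ _ ht hu htu) ht hu).1 h

theorem IsSuffixArray.exists_lt_of_sfx_lt (hSA : IsSuffixArray S n SA) {p u : ℕ} (hp : p ≤ n)
    (hu : u ≤ n) (h : sfx S n p < sfx S n (SA u)) : ∃ t < u, SA t = p := by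
  obtain ⟨t, ht, rfl⟩ := hSA.1.2.2 (Set.mem_Iic.2 hp)
  exact ⟨t, hSA.lt_of_sfx_lt ht hu h, rfl⟩

end SuffixArray

section Omega

variable {SA : ℕ → ℕ} {k : ℕ}

theorem neg_one_le_Omega (j : ℕ) : -1 ≤ Omega SA k j :=
  Finset.le_max' _ _ (Finset.mem_insert_self _ _)

theorem le_Omega {j t : ℕ} (ht : t ≤ k) (h : SA t < SA j) : (SA t : ℤ) ≤ Omega SA k j := by
  unfold Omega
  apply Finset.le_max'
  exact Finset.mem_insert_of_mem <| Finset.mem_image_of_mem _ <|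
    Finset.mem_filter.2 ⟨Finset.mem_range.2 (Nat.lt_succ_of_le ht), h⟩

theorem IsSuffixArray.not_sfx_lt_of_Omega_lt {S : ℕ → ℕ} {n : ℕ}
    (hSA : IsSuffixArray S n SA) (hkn : k ≤ n) {u w p : ℕ} (hw : w ≤ k)
    (hΩ : Omega SA k u < p) (hp : p < SA u) (hpn : p ≤ n) : ¬ sfx S n p < sfx S n (SA w) := by
  intro h
  obtain ⟨t, htw, rfl⟩ := hSA.exists_lt_of_sfx_lt hpn (hw.trans hkn) h
  have := le_Omega (k := k) (by omega) hp
  omega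

end Omega

section Words

variable {S SA : ℕ → ℕ} {n k : ℕ}

theorem wordList_eq_map (j : ℕ) : wordList S n SA k j =
    (List.range ((SA j : ℤ) - Omega SA k j).toNat).map fun t : ℕ =>
      Sc S n (Omega SA k j + t) := by
  rw [wordList, bind_pure_comp, List.map_eq_map, List.map_map]
  rfl

theorem wordM_drop_eq {w i : ℕ} (hΩ : Omega SA k w ≤ i) (hi : i ≤ SA w) (hn : SA w ≤ n) :
    (wordM S n SA k w).drop ((i : ℤ) - Omega SA k w).toNat =
      (List.range (SA w - i)).map (fun s => (S (i + s) : ℤ)) ++ [(w : ℤ) - (k + 1)] := by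
  set p := ((i : ℤ) - Omega SA k w).toNat
  have hsplit : ((SA w : ℤ) - Omega SA k w).toNat = p + (SA w - i) := by omega
  rw [wordM, wordList_eq_map, hsplit, List.range_add, List.map_append, List.append_assoc,
    List.drop_left' (by simp), List.map_map]
  congr 1
  refine List.map_congr_left fun s hs => ?_
  have hs : s < SA w - i := List.mem_range.1 hs
  have hpos : Omega SA k w + ((p + s : ℕ) : ℤ) = ((i + s : ℕ) : ℤ) := by omega
  rw [Function.comp_apply, hpos, Sc, if_pos (by omega), Int.toNat_natCast]

theorem wordM_eq_zero_cons {w : ℕ} (hΩ : Omega SA k w = -1) :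
    ∃ l, wordM S n SA k w = 0 :: l := by
  have hlen : ((SA w : ℤ) - Omega SA k w).toNat = SA w + 1 := by omega
  rw [wordM, wordList_eq_map, hlen, List.range_succ_eq_map, List.map_cons, List.cons_append]
  refine ⟨_, List.cons_eq_cons.2 ⟨?_, rfl⟩⟩
  simp [Sc, hΩ]

end Words

theorem posZ_self (n : ℕ) : posZ n n = -1 := if_pos rfl

theorem posZ_of_ne {n q : ℕ} (h : q ≠ n) : posZ n q = q := if_neg h

section MarkedRuns

variable {S SA : ℕ → ℕ} {n k i j wi wj : ℕ}

theorem IsSuffixArray.lex_markedRun_of_agree (hSA : IsSuffixArray S n SA) (hkn : k ≤ n)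
    (hwi : wi ≤ k) (hwj : wj ≤ k) (hΩ : Omega SA k wi ≤ i) (hi : i ≤ SA wi)
    (hj : j < SA wj) (hlt : sfx S n i < sfx S n j)
    (hagree : ∀ s < min (SA wi - i) (SA wj - j), S (i + s) = S (j + s)) :
    List.Lex (· < ·)
      ((List.range (SA wi - i)).map (fun s => (S (i + s) : ℤ)) ++ [(wi : ℤ) - (k + 1)])
      ((List.range (SA wj - j)).map (fun s => (S (j + s) : ℤ)) ++ [(wj : ℤ) - (k + 1)]) := by
  have hwin : SA wi ≤ n := hSA.apply_le (hwi.trans hkn)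
  have hwjn : SA wj ≤ n := hSA.apply_le (hwj.trans hkn)
  set di := SA wi - i
  set dj := SA wj - j
  have hsfx : ∀ c ≤ min di dj, sfx S n (i + c) < sfx S n (j + c) := fun c hc =>
    (sfx_lt_sfx_iff_of_agree (by omega) (by omega) fun s hs => hagree s (by omega)).1 hlt
  rcases le_or_gt di dj with hle | hgt
  · refine List.lex_map_range_append_singleton le_rfl hle
      (fun s hs => congrArg _ (hagree s (by omega))) ?_
    rw [if_neg (lt_irrefl _)]
    rcases hle.lt_or_eq with hd | hd
    · rw [if_pos hd]
      have : (0 : ℤ) ≤ S (j + di) := by positivity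
      omega
    · have hrank := hSA.lt_of_sfx_lt (hwi.trans hkn) (hwj.trans hkn)
        (by simpa only [show i + di = SA wi by omega, show j + di = SA wj by omega]
          using hsfx di (by omega))
      rw [if_neg (by omega)]
      omega
  · refine absurd (hsfx dj (by omega)) ?_
    rw [show j + dj = SA wj by omega]
    exact hSA.not_sfx_lt_of_Omega_lt (u := wi) hkn hwj (by omega) (by omega) (by omega)

theorem IsSuffixArray.lex_markedRun_of_sfx_lt (hSA : IsSuffixArray S n SA) (hkn : k ≤ n)
    (hwi : wi ≤ k) (hwj : wj ≤ k) (hΩ : Omega SA k wi ≤ i) (hi : i ≤ SA wi)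
    (hj : j < SA wj) (hlt : sfx S n i < sfx S n j) :
    List.Lex (· < ·)
      ((List.range (SA wi - i)).map (fun s => (S (i + s) : ℤ)) ++ [(wi : ℤ) - (k + 1)])
      ((List.range (SA wj - j)).map (fun s => (S (j + s) : ℤ)) ++ [(wj : ℤ) - (k + 1)]) := by
  by_cases hdiff : ∃ b < min (SA wi - i) (SA wj - j), S (i + b) ≠ S (j + b)
  · classical
    have hwin : SA wi ≤ n := hSA.apply_le (hwi.trans hkn)
    have hwjn : SA wj ≤ n := hSA.apply_le (hwj.trans hkn)
    obtain ⟨hb, hne⟩ := Nat.find_spec hdiff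
    set b := Nat.find hdiff
    have hagree : ∀ s < b, S (i + s) = S (j + s) := fun s hs =>
      not_not.1 fun h => Nat.find_min hdiff hs ⟨by omega, h⟩
    have hsfx := (sfx_lt_sfx_iff_of_agree (by omega) (by omega) hagree).1 hlt
    rw [sfx_eq_cons (i := i + b) (by omega), sfx_eq_cons (i := j + b) (by omega),
      List.cons_lt_cons_iff] at hsfx
    refine List.lex_map_range_append_singleton (b := b) (by omega) (by omega)
      (fun s hs => congrArg _ (hagree s hs)) ?_
    rw [if_pos (by omega), if_pos (by omega)]
    exact_mod_cast hsfx.resolve_right fun h => hne h.1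
  · push Not at hdiff
    exact hSA.lex_markedRun_of_agree hkn hwi hwj hΩ hi hj hlt hdiff

end MarkedRuns

/-- third-case tie-breaking: if `S[i..] < S[j..]`, the suffixes
agree on their first `c` characters, and `i+c = PSA[v]`, `j+c = PSA[w]` with
`v, w ≤ k`, then `v < w`, and the marker comparison decides
`W'_{word(i)}[position(i)..] < W'_{word(j)}[position(j)..]`. -/
theorem third_case_tie_breaking (S SA : ℕ → ℕ) (n k : ℕ) (hk : k < n)
    (hS : Sentinel S n) (hSA : IsSuffixArray S n SA)
    (i j c v w : ℕ) (hv : v ≤ k) (hw : w ≤ k)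
    (hiv : i + c = SA v) (hjw : j + c = SA w)
    (hagree : ∀ b < c, S (i + b) = S (j + b))
    (hlt : List.Lex (· < ·) (sfx S n i) (sfx S n j))
    (wi wj : ℕ) (hwi : wi ≤ k) (hwj : wj ≤ k)
    (hii : Omega SA k wi ≤ posZ n i ∧ posZ n i ≤ (SA wi : ℤ) - 1)
    (hjj : Omega SA k wj ≤ posZ n j ∧ posZ n j ≤ (SA wj : ℤ) - 1) :
    v < w ∧
    List.Lex (· < ·)
      ((wordM S n SA k wi).drop (posZ n i - Omega SA k wi).toNat)
      ((wordM S n SA k wj).drop (posZ n j - Omega SA k wj).toNat) := by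
  have hPSA : ∀ t ≤ k, SA t ≤ n := fun t ht => hSA.apply_le (ht.trans hk.le)
  have hvn := hPSA v hv
  have hwn := hPSA w hw
  have hin : i ≤ n := by omega
  have hjn : j < n := lt_of_le_of_ne (by omega) fun hj => hS.not_sfx_lt_sfx_self hin (hj ▸ hlt)
  have hsfx := (sfx_lt_sfx_iff_of_agree (by omega) (by omega) hagree).1 hlt
  rw [hiv, hjw] at hsfx
  refine ⟨hSA.lt_of_sfx_lt (hv.trans hk.le) (hw.trans hk.le) hsfx, ?_⟩
  rw [posZ_of_ne hjn.ne] at hjj ⊢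
  rw [wordM_drop_eq hjj.1 (by omega) (hPSA wj hwj)]
  rcases hin.eq_or_lt with rfl | hin
  · rw [posZ_self] at hii ⊢
    have hΩ : Omega SA k wi = -1 := le_antisymm hii.1 (neg_one_le_Omega wi)
    obtain ⟨l, hl⟩ := wordM_eq_zero_cons (S := S) (n := i) hΩ
    obtain ⟨d, hd⟩ : ∃ d, SA wj - j = d + 1 := ⟨SA wj - j - 1, by omega⟩
    rw [hΩ, sub_self, Int.toNat_zero, List.drop_zero, hl, hd, List.range_succ_eq_map,
      List.map_cons, List.cons_append]
    exact List.Lex.rel (by exact_mod_cast hS.2 (j + 0) (by omega))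
  · rw [posZ_of_ne hin.ne] at hii ⊢
    rw [wordM_drop_eq hii.1 (by omega) (hPSA wi hwi)]
    exact hSA.lex_markedRun_of_sfx_lt hk.le hwi hwj hii.1 (by omega) (by omega) hlt
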